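/- arXiv:2201.08275 — 2 statements merged into one kernel-verified Lean document; each statement's English description precedes it below -/
import Mathlib

section
/- In a deterministic pushdown rewriting system (configurations are pairs of a control state and a stack word, with deterministic trivial rewriting rules depending only on the control state and the top stack symbol), the system admits an infinite rewriting sequence from some configuration if and only if either (a) some configuration (X, ε) with empty stack recurs, i.e. following the rules from (X, ε) returns to (X, ε), or (b) there exist a state X and stack symbol σ such that starting from (X, σ) the rules lead to (X, σω) for some stack word ω without the stack ever becoming empty in between. -/
namespace PushdownRewriting

variable {Q Δ : Type*}

/-- One (partial, deterministic) rewriting step of a pushdown rewriting system: the rule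
depends only on the control state and the top stack symbol (`none` for the empty stack);
it yields a new state and a word replacing the top symbol. -/
def step (rule : Q → Option Δ → Option (Q × List Δ)) :
    Q × List Δ → Option (Q × List Δ)
  | (X, []) => rule X none
  | (X, σ :: S) => (rule X (some σ)).map fun p => (p.1, p.2 ++ S)

/-- Iterated rewriting. -/
def iter (rule : Q → Option Δ → Option (Q × List Δ)) :
    ℕ → Q × List Δ → Option (Q × List Δ)
  | 0, c => some c
  | n + 1, c => (step rule c).bind (iter rule n)

/-- An infinite rewriting sequence starts at `c`. -/
def InfiniteFrom (rule : Q → Option Δ → Option (Q × List Δ)) (c : Q × List Δ) : Prop :=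
  ∀ n : ℕ, (iter rule n c).isSome

end PushdownRewriting

/-!
Follow an infinite run `f` and look at its low points: the times after which the stack never gets
shorter. There are infinitely many of them, so by the pigeonhole principle two low points `a < b`
share the control state and the top symbol (or both have an empty stack). In the empty case the
run from `(X, ε)` returns to `(X, ε)`. Otherwise `f a = (X, σ·S)` and, `a` being a low point,
the suffix `S` is never touched between `a` and `b`, so the run from `(X, σ)` alone reaches
`(X, σ·ω)` with a nonempty stack throughout. Conversely, each of the two recurrences can be
repeated forever, since a run that never empties its stack is unaffected by what lies below it.
-/

namespace PushdownRewriting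

variable {Q Δ : Type*} (rule : Q → Option Δ → Option (Q × List Δ))

theorem iter_add (m n : ℕ) (c : Q × List Δ) :
    iter rule (m + n) c = (iter rule m c).bind (iter rule n) := by
  induction m generalizing c with
  | zero => simp [iter]
  | succ m ih =>
    rw [Nat.add_right_comm]
    cases h : step rule c <;> simp [iter, h, ih]

variable {rule}

theorem isSome_iter_of_le {c : Q × List Δ} {k j : ℕ} (hkj : k ≤ j)
    (h : (iter rule j c).isSome) : (iter rule k c).isSome := by
  rw [← Nat.add_sub_cancel' hkj, iter_add] at h
  exact Option.isSome_of_isSome_bind h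

theorem exists_orbit {c : Q × List Δ} (hc : InfiniteFrom rule c) :
    ∃ f : ℕ → Q × List Δ, ∀ m k, iter rule k (f m) = some (f (m + k)) := by
  refine ⟨fun n => (iter rule n c).get (hc n), fun m k => ?_⟩
  obtain ⟨d, hd⟩ := Option.isSome_iff_exists.1 (hc m)
  simp [iter_add, hd]

theorem infiniteFrom_of_forall_iter_mem {s : Set (Q × List Δ)} {n : ℕ} (hn : 0 < n)
    (hs : ∀ c ∈ s, ∃ c' ∈ s, iter rule n c = some c') {c : Q × List Δ} (hc : c ∈ s) :
    InfiniteFrom rule c := by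
  intro k
  induction k using Nat.strong_induction_on generalizing c with
  | _ k ih =>
    obtain ⟨c', hc's, hcc'⟩ := hs c hc
    rcases lt_or_ge k n with hkn | hnk
    · exact isSome_iter_of_le hkn.le (by simp [hcc'])
    · rw [← Nat.add_sub_cancel' hnk, iter_add, hcc', Option.bind_some]
      exact ih (k - n) (by omega) hc's

theorem step_append {X : Q} {w : List Δ} (hw : w ≠ []) (S : List Δ) :
    step rule (X, w ++ S) = (step rule (X, w)).map (Prod.map id (· ++ S)) := by
  obtain ⟨σ, w, rfl⟩ := List.exists_cons_of_ne_nil hw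
  simp [step, Option.map_map, Function.comp_def]

theorem iter_append {k : ℕ} {X : Q} {w : List Δ}
    (h : ∀ j < k, ∃ d, iter rule j (X, w) = some d ∧ d.2 ≠ []) (S : List Δ) :
    iter rule k (X, w ++ S) = (iter rule k (X, w)).map (Prod.map id (· ++ S)) := by
  induction k generalizing X w with
  | zero => rfl
  | succ k ih =>
    obtain ⟨d, hd, hw⟩ := h 0 k.succ_pos
    cases hd
    cases hstep : step rule (X, w) with
    | none => simp [iter, step_append hw, hstep]
    | some d =>
      have hsucc : ∀ j, iter rule (j + 1) (X, w) = iter rule j d := by simp [iter, hstep]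
      simp only [iter, step_append hw, hstep, Option.map_some, Option.bind_some]
      exact ih fun j hj => hsucc j ▸ h (j + 1) (by omega)

theorem iter_ne_nil_of_length_lt {k : ℕ} {X : Q} {w S : List Δ}
    (h : ∀ j ≤ k, ∃ c, iter rule j (X, w ++ S) = some c ∧ S.length < c.2.length) :
    ∀ j ≤ k, ∃ d, iter rule j (X, w) = some d ∧ d.2 ≠ [] := by
  intro j
  induction j using Nat.strong_induction_on with
  | _ j ih =>
    intro hjk
    obtain ⟨c, hc, hlen⟩ := h j hjk
    rw [iter_append (fun i hi => ih i hi (by omega)), Option.map_eq_some_iff] at hc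
    obtain ⟨d, hd, rfl⟩ := hc
    refine ⟨d, hd, fun hnil => ?_⟩
    simp [hnil] at hlen

theorem exists_iter_singleton_of_length_lt {n : ℕ} {X Y : Q} {σ τ : Δ} {S S' : List Δ}
    (h : ∀ j ≤ n, ∃ c, iter rule j (X, σ :: S) = some c ∧ S.length < c.2.length)
    (hn : iter rule n (X, σ :: S) = some (Y, τ :: S')) :
    ∃ ω, iter rule n (X, [σ]) = some (Y, τ :: ω) ∧
      ∀ k ≤ n, ∃ c, iter rule k (X, [σ]) = some c ∧ c.2 ≠ [] := by
  have hne := iter_ne_nil_of_length_lt (w := [σ]) h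
  rw [← List.singleton_append, iter_append fun j hj => hne j hj.le, Option.map_eq_some_iff] at hn
  obtain ⟨⟨Y', v⟩, hv, hvS⟩ := hn
  obtain ⟨d, hd, hd'⟩ := hne n le_rfl
  rw [hv, Option.some.injEq] at hd
  subst hd
  obtain ⟨τ', ω, rfl⟩ := List.exists_cons_of_ne_nil hd'
  simp only [Prod.map_apply, id, List.cons_append, Prod.mk.injEq, List.cons.injEq] at hvS
  obtain ⟨rfl, rfl, -⟩ := hvS
  exact ⟨ω, hv, hne⟩

theorem infiniteFrom_cons_of_iter_singleton {n : ℕ} {X : Q} {σ : Δ} {ω : List Δ} (hn : 0 < n)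
    (hne : ∀ j < n, ∃ d, iter rule j (X, [σ]) = some d ∧ d.2 ≠ [])
    (hσ : iter rule n (X, [σ]) = some (X, σ :: ω)) (S : List Δ) :
    InfiniteFrom rule (X, σ :: S) := by
  refine infiniteFrom_of_forall_iter_mem hn (s := {c | ∃ S, c = (X, σ :: S)}) ?_ ⟨S, rfl⟩
  rintro _ ⟨S, rfl⟩
  refine ⟨_, ⟨ω ++ S, rfl⟩, ?_⟩
  rw [← List.singleton_append, iter_append hne, hσ]
  rfl

end PushdownRewriting

theorem Nat.infinite_setOf_forall_le_of_le (g : ℕ → ℕ) :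
    {n | ∀ m, n ≤ m → g n ≤ g m}.Infinite := by
  refine Set.infinite_of_forall_exists_gt fun M => ?_
  obtain ⟨n, hMn : M + 1 ≤ n, hn⟩ :=
    Nat.sInf_mem (s := g '' Set.Ici (M + 1)) ⟨_, Set.mem_image_of_mem g (le_refl (M + 1))⟩
  refine ⟨n, fun m hm => ?_, by omega⟩
  rw [hn]
  exact Nat.sInf_le ⟨m, le_trans hMn hm, rfl⟩

open PushdownRewriting in
theorem infinite_rewriting_iff_recurrence_general {Q Δ : Type*} [Fintype Q] [Fintype Δ]
    (rule : Q → Option Δ → Option (Q × List Δ)) :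
    (∃ c : Q × List Δ, InfiniteFrom rule c) ↔
      ((∃ (X : Q) (n : ℕ), 0 < n ∧ iter rule n (X, []) = some (X, [])) ∨
       (∃ (X : Q) (σ : Δ) (ω : List Δ) (n : ℕ), 0 < n ∧
          iter rule n (X, [σ]) = some (X, σ :: ω) ∧
          ∀ k : ℕ, 0 < k → k < n →
            ∃ c' : Q × List Δ, iter rule k (X, [σ]) = some c' ∧ c'.2 ≠ [])) := by
  constructor
  · rintro ⟨c, hc⟩
    obtain ⟨f, hf⟩ := exists_orbit hc
    obtain ⟨a, ha, b, hb, hab, hfab⟩ :=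
      (Nat.infinite_setOf_forall_le_of_le fun n => (f n).2.length).exists_lt_map_eq_of_mapsTo
        (f := fun n => ((f n).1, (f n).2.head?)) (Set.mapsTo_univ _ _) Set.finite_univ
    have hfb := hf a (b - a)
    rw [Nat.add_sub_cancel' hab.le] at hfb
    rcases hfa : f a with ⟨X, _ | ⟨σ, S⟩⟩ <;> rcases hfb' : f b with ⟨Y, _ | ⟨τ, S'⟩⟩ <;>
      simp only [hfa, hfb', Prod.mk.injEq, List.head?_nil, List.head?_cons, reduceCtorEq,
        and_false, Option.some.injEq] at hfab hfb
    · obtain ⟨rfl, -⟩ := hfab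
      exact .inl ⟨X, b - a, by omega, hfb⟩
    · obtain ⟨rfl, rfl⟩ := hfab
      have hlow : ∀ j ≤ b - a, ∃ c, iter rule j (X, σ :: S) = some c ∧ S.length < c.2.length :=
        fun j _ => ⟨f (a + j), hfa ▸ hf a j, by simpa [hfa] using ha (a + j) (by omega)⟩
      obtain ⟨ω, hω, hne⟩ := exists_iter_singleton_of_length_lt hlow hfb
      exact .inr ⟨X, σ, ω, b - a, by omega, hω, fun k _ hk => hne k hk.le⟩
  · rintro (⟨X, n, hn, hX⟩ | ⟨X, σ, ω, n, hn, hσ, hne⟩)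
    · exact ⟨_, infiniteFrom_of_forall_iter_mem hn (s := {(X, [])}) (by simpa using hX) rfl⟩
    · have hne' : ∀ j < n, ∃ d, iter rule j (X, [σ]) = some d ∧ d.2 ≠ [] := by
        rintro (_ | j) hj
        · exact ⟨_, rfl, List.cons_ne_nil σ []⟩
        · exact hne (j + 1) j.succ_pos hj
      exact ⟨_, infiniteFrom_cons_of_iter_singleton hn hne' hσ []⟩

open PushdownRewriting in
/-- A deterministic pushdown rewriting system (over finite state and stack alphabets,
with rules that pop, replace, or push) admits an infinite rewriting sequence from some
configuration iff either (a) some empty-stack configuration `(X, ε)` recurs, or (b) from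
some `(X, σ)` the rules lead back to `(X, σ·ω)` without the stack ever becoming empty in
between. -/
theorem infinite_rewriting_iff_recurrence {Q Δ : Type*} [Fintype Q] [Fintype Δ]
    (rule : Q → Option Δ → Option (Q × List Δ))
    (hpush : ∀ (X : Q) (σ : Δ) (p : Q × List Δ), rule X (some σ) = some p → p.2.length ≤ 2)
    (hempty : ∀ (X : Q) (p : Q × List Δ), rule X none = some p → p.2.length ≤ 1) :
    (∃ c : Q × List Δ, InfiniteFrom rule c) ↔
      ((∃ (X : Q) (n : ℕ), 0 < n ∧ iter rule n (X, []) = some (X, [])) ∨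
       (∃ (X : Q) (σ : Δ) (ω : List Δ) (n : ℕ), 0 < n ∧
          iter rule n (X, [σ]) = some (X, σ :: ω) ∧
          ∀ k : ℕ, 0 < k → k < n →
            ∃ c' : Q × List Δ, iter rule k (X, [σ]) = some c' ∧ c'.2 ≠ [])) :=
  infinite_rewriting_iff_recurrence_general rule
end

section
/- Loop-freeness of a deterministic ε-transition structure on a finite state set with a counter is characterized by finite detection: for a deterministic one-counter automaton with state set Q, if a sequence of ε-moves from configuration (q, n) does not reach a reading configuration within |Q|·(n + |Q| + 1) steps, then the ε-sequence from (q, n) is infinite. -/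
namespace OneCounterEps

variable {Q : Type*}

/-- One deterministic ε-move of a one-counter automaton: it depends only on the state and
on whether the counter is zero; `none` means the configuration is a reading configuration
(no ε-move available); otherwise the move yields a new state and a counter change
`δ ∈ {-1, 0, +1}`. -/
def epsStep (eps : Q → Bool → Option (Q × ℤ)) : Q × ℕ → Option (Q × ℕ)
  | (q, n) => (eps q (n == 0)).map fun p => (p.1, (↑n + p.2).toNat)

/-- Running `m` ε-moves: `none` as soon as a reading configuration is met. -/
def run (eps : Q → Bool → Option (Q × ℤ)) : ℕ → Q × ℕ → Option (Q × ℕ)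
  | 0, c => some c
  | m + 1, c => (epsStep eps c).bind (run eps m)

end OneCounterEps


/-!
If the counter stays at most `B` along the first `|Q|·(B+1)` ε-moves, some configuration repeats
and the run cycles. Otherwise, with `B = n + |Q|`, the counter climbs from `n` above `n + |Q|`;
for each level `n + k` with `1 ≤ k ≤ |Q| + 1` take the last time before the climb at which the
counter equals `n + k`. Two of these last visits share a state, and between them the counter rises
while staying positive. Positive counters are never zero-tested, so that segment can be replayed
with every counter value shifted upwards, forever.
-/

theorem Finset.exists_lt_map_eq_of_card_lt_of_maps_to {α β : Type*} [LinearOrder α] {s : Finset α}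
    {t : Finset β} (hc : t.card < s.card) {f : α → β} (hf : Set.MapsTo f s t) :
    ∃ x ∈ s, ∃ y ∈ s, x < y ∧ f x = f y := by
  obtain ⟨x, hx, y, hy, hne, hxy⟩ := Finset.exists_ne_map_eq_of_card_lt_of_maps_to hc hf
  rcases hne.lt_or_gt with hlt | hlt
  · exact ⟨x, hx, y, hy, hlt, hxy⟩
  · exact ⟨y, hy, x, hx, hlt, hxy.symm⟩

theorem exists_last_visit {f : ℕ → ℕ} {t v : ℕ} (hstep : ∀ i < t, f (i + 1) ≤ f i + 1)
    (h0 : f 0 ≤ v) (ht : v ≤ f t) :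
    ∃ g ≤ t, f g = v ∧ ∀ l, g < l → l ≤ t → v < f l := by
  classical
  set g := Nat.findGreatest (fun l => f l ≤ v) t
  have hg : f g ≤ v := Nat.findGreatest_spec (P := fun l => f l ≤ v) (Nat.zero_le t) h0
  have hgt : g ≤ t := Nat.findGreatest_le t
  have hafter : ∀ l, g < l → l ≤ t → v < f l :=
    fun l hgl hlt => not_le.mp (Nat.findGreatest_is_greatest (P := fun l => f l ≤ v) hgl hlt)
  refine ⟨g, hgt, ?_, hafter⟩
  rcases hgt.lt_or_eq with hlt | heq
  · have := hafter (g + 1) (by omega) hlt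
    have := hstep g hlt
    omega
  · rw [heq] at hg ⊢
    omega

namespace OneCounterEps

open Finset

variable {Q : Type*} {eps : Q → Bool → Option (Q × ℤ)}

def Diverges (eps : Q → Bool → Option (Q × ℤ)) (c : Q × ℕ) : Prop :=
  ∀ m, (run eps m c).isSome

def MovesByAtMostOne (eps : Q → Bool → Option (Q × ℤ)) : Prop :=
  ∀ (q : Q) (z : Bool) (p : Q × ℤ), eps q z = some p → |p.2| ≤ 1

theorem run_add (a b : ℕ) (c : Q × ℕ) :
    run eps (a + b) c = (run eps a c).bind (run eps b) := by
  induction a generalizing c with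
  | zero => simp [run]
  | succ a ih =>
    rw [Nat.add_right_comm, run, run, Option.bind_assoc]
    cases epsStep eps c <;> simp [ih]

theorem run_one (c : Q × ℕ) : run eps 1 c = epsStep eps c := by
  simp [run]

theorem isSome_run_of_le {a b : ℕ} (hab : a ≤ b) {c : Q × ℕ} (h : (run eps b c).isSome) :
    (run eps a c).isSome := by
  rw [← Nat.add_sub_cancel' hab, run_add] at h
  cases hr : run eps a c <;> simp_all

theorem Diverges.of_run_eq_some {i : ℕ} {c c' : Q × ℕ} (hi : run eps i c = some c')
    (h : Diverges eps c') : Diverges eps c := by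
  intro m
  rcases le_total m i with hm | hm
  · exact isSome_run_of_le hm (by simp [hi])
  · rw [← Nat.add_sub_cancel' hm, run_add, hi, Option.bind_some]
    exact h (m - i)

theorem diverges_of_isSome_run_mul {d : ℕ} (hd : 0 < d) {c : Q × ℕ}
    (h : ∀ k, (run eps (k * d) c).isSome) : Diverges eps c :=
  fun m => isSome_run_of_le (Nat.le_mul_of_pos_right m hd) (h m)

theorem diverges_of_run_eq_self {d : ℕ} (hd : 0 < d) {c : Q × ℕ} (h : run eps d c = some c) :
    Diverges eps c := by
  have hk : ∀ k, run eps (k * d) c = some c := by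
    intro k
    induction k with
    | zero => simp [run]
    | succ k ih => rw [Nat.succ_mul, run_add, ih, Option.bind_some, h]
  exact diverges_of_isSome_run_mul hd fun k => by simp [hk k]

theorem epsStep_counter_le (hε : MovesByAtMostOne eps) {c c' : Q × ℕ}
    (h : epsStep eps c = some c') : c'.2 ≤ c.2 + 1 := by
  obtain ⟨q, n⟩ := c
  obtain ⟨p, hp, rfl⟩ := Option.map_eq_some_iff.mp h
  have := abs_le.mp (hε _ _ p hp)
  simp only
  omega

theorem epsStep_add_counter (hε : MovesByAtMostOne eps) {q : Q} {n : ℕ} (hn : 0 < n) (s : ℕ) :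
    epsStep eps (q, n + s) = (epsStep eps (q, n)).map fun c => (c.1, c.2 + s) := by
  have hz : (n == 0) = false := by simpa using hn.ne'
  have hz' : (n + s == 0) = false := by simp only [beq_eq_false_iff_ne]; omega
  simp only [epsStep, hz, hz', Option.map_map]
  cases hp : eps q false with
  | none => rfl
  | some p =>
    have := abs_le.mp (hε _ _ p hp)
    simp only [Option.map_some, Function.comp_apply, Option.some.injEq, Prod.mk.injEq, true_and]
    omega

theorem run_add_counter (hε : MovesByAtMostOne eps) (s : ℕ) :
    ∀ {d : ℕ} {c c' : Q × ℕ}, run eps d c = some c' →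
      (∀ i < d, ∀ ci, run eps i c = some ci → 0 < ci.2) →
      run eps d (c.1, c.2 + s) = some (c'.1, c'.2 + s)
  | 0, _, _, h, _ => by cases h; rfl
  | d + 1, (q, n), c', h, hpos => by
    have hn : 0 < n := hpos 0 (Nat.succ_pos d) _ rfl
    obtain ⟨c₁, h₁, hrest⟩ := Option.bind_eq_some_iff.mp h
    rw [run, epsStep_add_counter hε hn, h₁, Option.map_some, Option.bind_some]
    refine run_add_counter hε s hrest fun i hi ci hci => hpos (i + 1) (by omega) ci ?_
    rw [run, h₁, Option.bind_some, hci]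

theorem run_mul_of_run_eq_add (hε : MovesByAtMostOne eps) {d e : ℕ} {q : Q} {n : ℕ}
    (h : run eps d (q, n) = some (q, n + e))
    (hpos : ∀ i < d, ∀ ci, run eps i (q, n) = some ci → 0 < ci.2) (k : ℕ) :
    run eps (k * d) (q, n) = some (q, n + k * e) := by
  induction k with
  | zero => simp [run]
  | succ k ih =>
    rw [Nat.succ_mul, run_add, ih, Option.bind_some, run_add_counter hε (k * e) h hpos]
    congr 2
    ring

theorem diverges_of_run_eq_of_le (hε : MovesByAtMostOne eps) {d : ℕ} (hd : 0 < d)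
    {c c' : Q × ℕ} (hstate : c'.1 = c.1) (hle : c.2 ≤ c'.2) (h : run eps d c = some c')
    (hpos : ∀ i < d, ∀ ci, run eps i c = some ci → 0 < ci.2) : Diverges eps c := by
  obtain ⟨q, n⟩ := c
  obtain ⟨q', n'⟩ := c'
  obtain ⟨e, rfl⟩ := Nat.exists_eq_add_of_le hle
  cases hstate
  exact diverges_of_isSome_run_mul hd fun k => by simp [run_mul_of_run_eq_add hε h hpos k]

section Trajectory

variable {T : ℕ} {c₀ : Q × ℕ} {c : ℕ → Q × ℕ}

theorem exists_trajectory (h : (run eps T c₀).isSome) :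
    ∃ c : ℕ → Q × ℕ, ∀ i ≤ T, run eps i c₀ = some (c i) := by
  refine ⟨fun i => (run eps i c₀).getD c₀, fun i hi => ?_⟩
  obtain ⟨x, hx⟩ := Option.isSome_iff_exists.mp (isSome_run_of_le hi h)
  simp [hx]

theorem run_eq_of_trajectory (hc : ∀ i ≤ T, run eps i c₀ = some (c i)) {i m : ℕ}
    (h : i + m ≤ T) : run eps m (c i) = some (c (i + m)) := by
  have := hc (i + m) h
  rwa [run_add, hc i (by omega), Option.bind_some] at this

theorem trajectory_counter_succ_le (hε : MovesByAtMostOne eps)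
    (hc : ∀ i ≤ T, run eps i c₀ = some (c i)) {i : ℕ} (hi : i < T) :
    (c (i + 1)).2 ≤ (c i).2 + 1 :=
  epsStep_counter_le hε (by rw [← run_one]; exact run_eq_of_trajectory hc hi)

theorem diverges_of_trajectory_counter_le [Fintype Q] {B : ℕ}
    (hc : ∀ i ≤ T, run eps i c₀ = some (c i)) (hT : Fintype.card Q * (B + 1) ≤ T)
    (hB : ∀ i ≤ T, (c i).2 ≤ B) : Diverges eps c₀ := by
  classical
  obtain ⟨i, hi, j, hj, hij, hcij⟩ := exists_lt_map_eq_of_card_lt_of_maps_to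
    (s := range (T + 1)) (t := univ ×ˢ range (B + 1)) (f := c)
    (by simp only [card_product, card_univ, card_range]; omega)
    (fun i hi => by
      have := hB i (Nat.lt_succ_iff.mp (mem_range.mp hi))
      simp only [coe_product, coe_univ, coe_range, Set.mem_prod, Set.mem_univ, Set.mem_Iio,
        true_and]
      omega)
  rw [mem_range] at hi hj
  have hloop := run_eq_of_trajectory hc (i := i) (m := j - i) (by omega)
  rw [Nat.add_sub_cancel' hij.le, ← hcij] at hloop
  exact (diverges_of_run_eq_self (by omega) hloop).of_run_eq_some (hc i (by omega))

theorem diverges_of_trajectory_pump (hε : MovesByAtMostOne eps)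
    (hc : ∀ i ≤ T, run eps i c₀ = some (c i)) {i j : ℕ} (hij : i < j) (hjT : j ≤ T)
    (hstate : (c i).1 = (c j).1) (hle : (c i).2 ≤ (c j).2)
    (hpos : ∀ l, i ≤ l → l < j → 0 < (c l).2) : Diverges eps c₀ := by
  obtain ⟨d, rfl⟩ := Nat.exists_eq_add_of_le hij.le
  refine (diverges_of_run_eq_of_le hε (by omega) hstate.symm hle
    (run_eq_of_trajectory hc hjT) fun m hm cm hcm => ?_).of_run_eq_some (hc i (by omega))
  rw [run_eq_of_trajectory hc (by omega), Option.some_inj] at hcm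
  exact hcm ▸ hpos (i + m) (by omega) (by omega)

theorem diverges_of_trajectory_rise [Fintype Q] (hε : MovesByAtMostOne eps) {t : ℕ}
    (hc : ∀ i ≤ t, run eps i c₀ = some (c i)) (hrise : c₀.2 + Fintype.card Q < (c t).2) :
    Diverges eps c₀ := by
  classical
  have hc0 : c 0 = c₀ := by simpa [run] using (hc 0 (Nat.zero_le t)).symm
  have hlast : ∀ k ≤ Fintype.card Q, ∃ g ≤ t, (c g).2 = c₀.2 + k + 1 ∧
      ∀ l, g < l → l ≤ t → c₀.2 + k + 1 < (c l).2 := fun k hk =>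
    exists_last_visit (f := fun i => (c i).2) (fun i hi => trajectory_counter_succ_le hε hc hi)
      (by simp only [hc0]; omega) (by omega)
  choose! g hgt hgv hgafter using hlast
  obtain ⟨k₁, hk₁, k₂, hk₂, hk, hstate⟩ := exists_lt_map_eq_of_card_lt_of_maps_to
    (s := range (Fintype.card Q + 1)) (t := univ) (f := fun k => (c (g k)).1)
    (by simp) (fun _ _ => mem_coe.mpr (mem_univ _))
  rw [mem_range, Nat.lt_succ_iff] at hk₁ hk₂
  have hv₁ := hgv k₁ hk₁
  have hv₂ := hgv k₂ hk₂
  have hg : g k₁ < g k₂ := by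
    by_contra! hle
    rcases hle.lt_or_eq with hlt | heq
    · have := hgafter k₂ hk₂ (g k₁) hlt (hgt k₁ hk₁)
      omega
    · rw [heq] at hv₂
      omega
  refine diverges_of_trajectory_pump hε hc hg (hgt k₂ hk₂) hstate (by omega) fun l hl _ => ?_
  rcases hl.lt_or_eq with hlt | rfl
  · have := hgafter k₁ hk₁ l hlt (by have := hgt k₂ hk₂; omega)
    omega
  · omega

end Trajectory

end OneCounterEps

open OneCounterEps in
theorem one_counter_eps_loop_detection_general {Q : Type*} [Fintype Q]
    (eps : Q → Bool → Option (Q × ℤ))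
    (hbound : ∀ (q : Q) (z : Bool) (p : Q × ℤ), eps q z = some p → |p.2| ≤ 1)
    (q : Q) (n : ℕ)
    (h : (run eps (Fintype.card Q * (n + Fintype.card Q + 1)) (q, n)).isSome) :
    ∀ m : ℕ, (run eps m (q, n)).isSome := by
  obtain ⟨c, hc⟩ := exists_trajectory h
  by_cases hrise : ∃ t ≤ Fintype.card Q * (n + Fintype.card Q + 1), n + Fintype.card Q < (c t).2
  · obtain ⟨t, ht, hct⟩ := hrise
    exact diverges_of_trajectory_rise hbound (fun i hi => hc i (hi.trans ht)) hct
  · push Not at hrise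
    exact diverges_of_trajectory_counter_le hc le_rfl hrise

open OneCounterEps in
/-- Finite detection of ε-loops in deterministic one-counter automata: if the sequence of
ε-moves from configuration `(q, n)` does not reach a reading configuration within
`|Q| · (n + |Q| + 1)` steps, then it never does, i.e. the ε-sequence from `(q, n)` is
infinite. -/
theorem one_counter_eps_loop_detection {Q : Type*} [Fintype Q]
    (eps : Q → Bool → Option (Q × ℤ))
    (hbound : ∀ (q : Q) (z : Bool) (p : Q × ℤ), eps q z = some p → |p.2| ≤ 1)
    (hzero : ∀ (q : Q) (p : Q × ℤ), eps q true = some p → 0 ≤ p.2)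
    (q : Q) (n : ℕ)
    (h : (run eps (Fintype.card Q * (n + Fintype.card Q + 1)) (q, n)).isSome) :
    ∀ m : ℕ, (run eps m (q, n)).isSome :=
  one_counter_eps_loop_detection_general eps hbound q n h
end
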